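/- Let (L, Δ, δ_L, α) be a Hom-AssCoDer pair over K with (α ⊗ α)∘Δ = Δ∘α, and let T : L → L be an endomorphism operator (i.e. Δ∘T = (T ⊗ T)∘Δ) satisfying T∘α = α∘T, T∘T = T and T∘δ_L = δ_L∘T. Define Δ_c = (1_L ⊗ T)∘Δ − (T ⊗ 1_L)∘τ∘Δ : L → L ⊗ L. Then (L, Δ_c, δ_L, α) is a Hom-Lie CoDer pair: Δ_c = −τ∘Δ_c, the Hom-co-Jacobi identity (1 + ξ + ξ²)∘(α ⊗ Δ_c)∘Δ_c = 0 holds, and δ_L is an α-coderivation with respect to Δ_c. -/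
import Mathlib


open scoped TensorProduct

/-- The cyclic permutation ξ : x⊗y⊗z ↦ y⊗z⊗x on `L ⊗ (L ⊗ L)`. -/
noncomputable def cyc (K : Type*) [Field K] (L : Type*) [AddCommGroup L] [Module K L] :
    L ⊗[K] (L ⊗[K] L) →ₗ[K] L ⊗[K] (L ⊗[K] L) :=
  (TensorProduct.assoc K L L L).toLinearMap ∘ₗ (TensorProduct.comm K L (L ⊗[K] L)).toLinearMap

/-- A Hom-coassociative coalgebra: (α ⊗ Δ)∘Δ = (Δ ⊗ α)∘Δ, identifying
(L ⊗ L) ⊗ L ≅ L ⊗ (L ⊗ L) via the associator. -/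
def IsHomCoassociative {K : Type*} [Field K] {L : Type*} [AddCommGroup L] [Module K L]
    (Δ : L →ₗ[K] L ⊗[K] L) (α : L →ₗ[K] L) : Prop :=
  TensorProduct.map α Δ ∘ₗ Δ =
    (TensorProduct.assoc K L L L).toLinearMap ∘ₗ TensorProduct.map Δ α ∘ₗ Δ

/-- φ is an α-coderivation of Δ. -/
def IsCoderivation {K : Type*} [Field K] {L : Type*} [AddCommGroup L] [Module K L]
    (Δ : L →ₗ[K] L ⊗[K] L) (α φ : L →ₗ[K] L) : Prop :=
  Δ ∘ₗ φ = TensorProduct.map φ α ∘ₗ Δ + TensorProduct.map α φ ∘ₗ Δ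

/-- A Hom-Lie coalgebra: Δ' = −τ∘Δ' and (1 + ξ + ξ²)∘(α ⊗ Δ')∘Δ' = 0. -/
def IsHomLieCoalgebra {K : Type*} [Field K] {L : Type*} [AddCommGroup L] [Module K L]
    (Δ : L →ₗ[K] L ⊗[K] L) (α : L →ₗ[K] L) : Prop :=
  ((TensorProduct.comm K L L).toLinearMap ∘ₗ Δ = -Δ) ∧
  ((LinearMap.id + cyc K L + cyc K L ∘ₗ cyc K L) ∘ₗ (TensorProduct.map α Δ ∘ₗ Δ) = 0)

/-- A Hom-Lie CoDer pair (L, Δ, φ, α). -/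
def IsHomLieCoDerPair {K : Type*} [Field K] {L : Type*} [AddCommGroup L] [Module K L]
    (Δ : L →ₗ[K] L ⊗[K] L) (φ α : L →ₗ[K] L) : Prop :=
  IsHomLieCoalgebra Δ α ∧ IsCoderivation Δ α φ

section Aux

open TensorProduct LinearMap

variable {K : Type*} [Field K] {L : Type*} [AddCommGroup L] [Module K L]

/-- map is additive/subtractive in the right slot (general modules). -/
lemma aux_map_sub_right {M N P Q : Type*} [AddCommGroup M] [AddCommGroup N] [AddCommGroup P]
    [AddCommGroup Q] [Module K M] [Module K N] [Module K P] [Module K Q]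
    (f : M →ₗ[K] P) (g h : N →ₗ[K] Q) :
    map f (g - h) = map f g - map f h := by
  ext x y; simp [tmul_sub]

/-- fuse two maps with an arbitrary tail. -/
lemma aux_map_map_comp {M N P Q P' Q' W : Type*} [AddCommGroup M] [AddCommGroup N]
    [AddCommGroup P] [AddCommGroup Q] [AddCommGroup P'] [AddCommGroup Q'] [AddCommGroup W]
    [Module K M] [Module K N] [Module K P] [Module K Q] [Module K P'] [Module K Q']
    [Module K W]
    (f₂ : P →ₗ[K] P') (f₁ : M →ₗ[K] P) (g₂ : Q →ₗ[K] Q') (g₁ : N →ₗ[K] Q)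
    (X : W →ₗ[K] M ⊗[K] N) :
    map f₂ g₂ ∘ₗ (map f₁ g₁ ∘ₗ X) = map (f₂ ∘ₗ f₁) (g₂ ∘ₗ g₁) ∘ₗ X := by
  rw [← LinearMap.comp_assoc, ← TensorProduct.map_comp]

/-- naturality of comm with an arbitrary tail. -/
lemma aux_map_comm {M N P Q W : Type*} [AddCommGroup M] [AddCommGroup N] [AddCommGroup P]
    [AddCommGroup Q] [AddCommGroup W]
    [Module K M] [Module K N] [Module K P] [Module K Q] [Module K W]
    (f : M →ₗ[K] P) (g : N →ₗ[K] Q) (X : W →ₗ[K] N ⊗[K] M) :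
    map f g ∘ₗ ((TensorProduct.comm K N M).toLinearMap ∘ₗ X) =
      (TensorProduct.comm K Q P).toLinearMap ∘ₗ (map g f ∘ₗ X) := by
  rw [← LinearMap.comp_assoc, ← LinearMap.comp_assoc]
  congr 1
  ext x y; simp

/-- comm-naturality, comm-first form, with tail. -/
lemma aux_comm_map {M N P Q W : Type*} [AddCommGroup M] [AddCommGroup N] [AddCommGroup P]
    [AddCommGroup Q] [AddCommGroup W]
    [Module K M] [Module K N] [Module K P] [Module K Q] [Module K W]
    (f : M →ₗ[K] P) (g : N →ₗ[K] Q) (X : W →ₗ[K] M ⊗[K] N) :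
    (TensorProduct.comm K P Q).toLinearMap ∘ₗ (map f g ∘ₗ X) =
      map g f ∘ₗ ((TensorProduct.comm K M N).toLinearMap ∘ₗ X) := by
  rw [← LinearMap.comp_assoc, ← LinearMap.comp_assoc]
  congr 1
  ext x y; simp

lemma aux_comm_comm {M N W : Type*} [AddCommGroup M] [AddCommGroup N] [AddCommGroup W]
    [Module K M] [Module K N] [Module K W] (X : W →ₗ[K] M ⊗[K] N) :
    (TensorProduct.comm K N M).toLinearMap ∘ₗ ((TensorProduct.comm K M N).toLinearMap ∘ₗ X)
      = X := by
  rw [← LinearMap.comp_assoc]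
  have : (TensorProduct.comm K N M).toLinearMap ∘ₗ (TensorProduct.comm K M N).toLinearMap
      = LinearMap.id := by ext x y; simp
  rw [this, LinearMap.id_comp]

/-- P3 -/
lemma aux_P3 (T : L →ₗ[K] L) :
    map LinearMap.id (map LinearMap.id T) ∘ₗ (TensorProduct.comm K (L ⊗[K] L) L).toLinearMap
      ∘ₗ map (LinearMap.id : L ⊗[K] L →ₗ[K] L ⊗[K] L) T
      ∘ₗ (TensorProduct.assoc K L L L).symm.toLinearMap
    = (cyc K L ∘ₗ cyc K L) ∘ₗ map LinearMap.id (map T T) := by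
  ext x y z; simp [cyc]

/-- P4 -/
lemma aux_P4 (T : L →ₗ[K] L) :
    map LinearMap.id (map T LinearMap.id)
      ∘ₗ map LinearMap.id (TensorProduct.comm K L L).toLinearMap
      ∘ₗ (TensorProduct.comm K (L ⊗[K] L) L).toLinearMap
      ∘ₗ map (LinearMap.id : L ⊗[K] L →ₗ[K] L ⊗[K] L) T
      ∘ₗ (TensorProduct.assoc K L L L).symm.toLinearMap
    = map LinearMap.id (TensorProduct.comm K L L).toLinearMap
        ∘ₗ (cyc K L ∘ₗ cyc K L) ∘ₗ map LinearMap.id (map T T) := by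
  ext x y z; simp [cyc]

/-- P0: the symmetric-group identity. -/
lemma aux_P0 :
    (LinearMap.id + cyc K L + cyc K L ∘ₗ cyc K L) ∘ₗ
    (LinearMap.id - map LinearMap.id (TensorProduct.comm K L L).toLinearMap
      - cyc K L ∘ₗ cyc K L
      + map LinearMap.id (TensorProduct.comm K L L).toLinearMap ∘ₗ (cyc K L ∘ₗ cyc K L)) = 0 := by
  ext x y z
  simp [cyc]
  abel

lemma aux_assoc_cancel {K : Type*} [Field K] {M N P W : Type*} [AddCommGroup M] [AddCommGroup N]
    [AddCommGroup P] [AddCommGroup W] [Module K M] [Module K N] [Module K P] [Module K W]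
    (X : W →ₗ[K] (M ⊗[K] N) ⊗[K] P) :
    (TensorProduct.assoc K M N P).symm.toLinearMap
      ∘ₗ ((TensorProduct.assoc K M N P).toLinearMap ∘ₗ X) = X := by
  rw [← LinearMap.comp_assoc]
  have h : (TensorProduct.assoc K M N P).symm.toLinearMap
      ∘ₗ (TensorProduct.assoc K M N P).toLinearMap = LinearMap.id := by
    ext x y z; simp
  rw [h, LinearMap.id_comp]

end Aux

set_option maxHeartbeats 2000000 in
/-- If (L, Δ, δ_L, α) is a Hom-AssCoDer pair with (α ⊗ α)∘Δ = Δ∘α and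
T is an endomorphism operator (Δ∘T = (T ⊗ T)∘Δ) with T∘α = α∘T, T² = T and
T∘δ_L = δ_L∘T, then Δ_c = (1 ⊗ T)∘Δ − (T ⊗ 1)∘τ∘Δ makes (L, Δ_c, δ_L, α) a
Hom-Lie CoDer pair. -/


theorem homAssCoDerPair_endomorphismOperator
    {K : Type*} [Field K] [CharZero K] {L : Type*} [AddCommGroup L] [Module K L]
    (Δ : L →ₗ[K] L ⊗[K] L) (δL α T : L →ₗ[K] L)
    (hcoass : IsHomCoassociative Δ α)
    (hmult : TensorProduct.map α α ∘ₗ Δ = Δ ∘ₗ α)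
    (hcoder : IsCoderivation Δ α δL)
    (hendo : Δ ∘ₗ T = TensorProduct.map T T ∘ₗ Δ)
    (hTα : T ∘ₗ α = α ∘ₗ T)
    (hT2 : T ∘ₗ T = T)
    (hTδ : T ∘ₗ δL = δL ∘ₗ T) :
    IsHomLieCoDerPair
      (TensorProduct.map (LinearMap.id : L →ₗ[K] L) T ∘ₗ Δ
        - TensorProduct.map T (LinearMap.id : L →ₗ[K] L)
            ∘ₗ (TensorProduct.comm K L L).toLinearMap ∘ₗ Δ) δL α := by
  open TensorProduct LinearMap in
  rw [IsHomCoassociative] at hcoass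
  rw [IsCoderivation] at hcoder
  set I : L →ₗ[K] L := LinearMap.id with hI
  set c : L ⊗[K] L →ₗ[K] L ⊗[K] L := (TensorProduct.comm K L L).toLinearMap with hc
  set A : L →ₗ[K] L ⊗[K] L := TensorProduct.map I T ∘ₗ Δ with hA
  set B : L →ₗ[K] L ⊗[K] L := TensorProduct.map T I ∘ₗ c ∘ₗ Δ with hB
  -- some basic facts
  have hcA : c ∘ₗ A = B := by
    rw [hA, hB, ← LinearMap.comp_assoc]
    rw [show c ∘ₗ TensorProduct.map I T = TensorProduct.map T I ∘ₗ c by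
      ext x y; simp [hc, hI]]
    rw [LinearMap.comp_assoc]
  have hcB : c ∘ₗ B = A := by
    rw [hA, hB]
    rw [show TensorProduct.map T I ∘ₗ c ∘ₗ Δ = TensorProduct.map T I ∘ₗ (c ∘ₗ Δ) from rfl]
    rw [aux_map_comm (K := K) T I Δ]
    rw [← hc, aux_comm_comm]
  refine ⟨⟨?_, ?_⟩, ?_⟩
  · -- antisymmetry
    rw [LinearMap.comp_sub, hcA, hcB, neg_sub]
  · -- co-Jacobi
    simp only [hA, hB, hI, hc]
    have hco' : TensorProduct.map Δ α ∘ₗ Δ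
        = (TensorProduct.assoc K L L L).symm.toLinearMap ∘ₗ (TensorProduct.map α Δ ∘ₗ Δ) := by
      rw [hcoass, aux_assoc_cancel]
    have hS1 : TensorProduct.map α Δ ∘ₗ (TensorProduct.map LinearMap.id T ∘ₗ Δ)
        = TensorProduct.map LinearMap.id (TensorProduct.map T T)
            ∘ₗ (TensorProduct.map α Δ ∘ₗ Δ) := by
      rw [aux_map_map_comp, hendo, aux_map_map_comp]
      simp
    have hsplit : TensorProduct.map Δ (T ∘ₗ α) ∘ₗ Δ
        = TensorProduct.map (LinearMap.id : L ⊗[K] L →ₗ[K] L ⊗[K] L) T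
            ∘ₗ (TensorProduct.map Δ α ∘ₗ Δ) := by
      rw [aux_map_map_comp]; simp
    have hS2 : TensorProduct.map α Δ
          ∘ₗ (TensorProduct.map T LinearMap.id ∘ₗ ((TensorProduct.comm K L L).toLinearMap ∘ₗ Δ))
        = (TensorProduct.comm K (L ⊗[K] L) L).toLinearMap
            ∘ₗ (TensorProduct.map (LinearMap.id : L ⊗[K] L →ₗ[K] L ⊗[K] L) T
            ∘ₗ ((TensorProduct.assoc K L L L).symm.toLinearMap
            ∘ₗ (TensorProduct.map α Δ ∘ₗ Δ))) := by
      rw [aux_map_map_comp]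
      simp only [LinearMap.comp_id]
      rw [← hTα, aux_map_comm, hsplit, hco']
    -- the four terms
    have t1 : TensorProduct.map LinearMap.id (TensorProduct.map LinearMap.id T)
          ∘ₗ (TensorProduct.map α Δ ∘ₗ (TensorProduct.map LinearMap.id T ∘ₗ Δ))
        = TensorProduct.map LinearMap.id (TensorProduct.map T T)
            ∘ₗ (TensorProduct.map α Δ ∘ₗ Δ) := by
      rw [hS1, aux_map_map_comp, ← TensorProduct.map_comp, hT2]
      simp
    have t2 : TensorProduct.map LinearMap.id (TensorProduct.map T LinearMap.id)
          ∘ₗ (TensorProduct.map LinearMap.id (TensorProduct.comm K L L).toLinearMap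
          ∘ₗ (TensorProduct.map α Δ ∘ₗ (TensorProduct.map LinearMap.id T ∘ₗ Δ)))
        = TensorProduct.map LinearMap.id (TensorProduct.comm K L L).toLinearMap
            ∘ₗ (TensorProduct.map LinearMap.id (TensorProduct.map T T)
            ∘ₗ (TensorProduct.map α Δ ∘ₗ Δ)) := by
      rw [hS1, aux_map_map_comp, aux_map_map_comp, aux_map_map_comp]
      have h2 : TensorProduct.map T LinearMap.id
            ∘ₗ ((TensorProduct.comm K L L).toLinearMap ∘ₗ TensorProduct.map T T)
          = (TensorProduct.comm K L L).toLinearMap ∘ₗ TensorProduct.map T T := by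
        ext x y
        simp
        rw [show T (T y) = T y from DFunLike.congr_fun hT2 y]
      have h2' := congrArg (fun F => F ∘ₗ Δ) h2
      simp only [LinearMap.comp_assoc] at h2'
      simp only [LinearMap.comp_assoc, LinearMap.id_comp]
      rw [h2']
      rw [aux_map_map_comp, aux_map_map_comp]
      simp [LinearMap.comp_assoc]
    have t3 : TensorProduct.map LinearMap.id (TensorProduct.map LinearMap.id T)
          ∘ₗ (TensorProduct.map α Δ
          ∘ₗ (TensorProduct.map T LinearMap.id ∘ₗ ((TensorProduct.comm K L L).toLinearMap ∘ₗ Δ)))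
        = cyc K L ∘ₗ (cyc K L ∘ₗ (TensorProduct.map LinearMap.id (TensorProduct.map T T)
            ∘ₗ (TensorProduct.map α Δ ∘ₗ Δ))) := by
      rw [hS2]
      have h3 := congrArg (fun F => F ∘ₗ (TensorProduct.map α Δ ∘ₗ Δ)) (aux_P3 (K := K) (L := L) T)
      simp only [LinearMap.comp_assoc] at h3 ⊢
      exact h3
    have t4 : TensorProduct.map LinearMap.id (TensorProduct.map T LinearMap.id)
          ∘ₗ (TensorProduct.map LinearMap.id (TensorProduct.comm K L L).toLinearMap
          ∘ₗ (TensorProduct.map α Δ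
          ∘ₗ (TensorProduct.map T LinearMap.id ∘ₗ ((TensorProduct.comm K L L).toLinearMap ∘ₗ Δ))))
        = TensorProduct.map LinearMap.id (TensorProduct.comm K L L).toLinearMap
            ∘ₗ (cyc K L ∘ₗ (cyc K L ∘ₗ (TensorProduct.map LinearMap.id (TensorProduct.map T T)
            ∘ₗ (TensorProduct.map α Δ ∘ₗ Δ)))) := by
      rw [hS2]
      have h4 := congrArg (fun F => F ∘ₗ (TensorProduct.map α Δ ∘ₗ Δ)) (aux_P4 (K := K) (L := L) T)
      simp only [LinearMap.comp_assoc] at h4 ⊢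
      exact h4
    have hsub : TensorProduct.map α
          (TensorProduct.map LinearMap.id T ∘ₗ Δ
            - TensorProduct.map T LinearMap.id ∘ₗ (TensorProduct.comm K L L).toLinearMap ∘ₗ Δ)
        = TensorProduct.map LinearMap.id (TensorProduct.map LinearMap.id T)
            ∘ₗ TensorProduct.map α Δ
          - TensorProduct.map LinearMap.id (TensorProduct.map T LinearMap.id)
            ∘ₗ (TensorProduct.map LinearMap.id (TensorProduct.comm K L L).toLinearMap
            ∘ₗ TensorProduct.map α Δ) := by
      rw [aux_map_sub_right]
      congr 1
      · rw [← TensorProduct.map_comp]; simp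
      · rw [aux_map_map_comp, ← TensorProduct.map_comp]
        simp [LinearMap.comp_assoc]
    rw [hsub]
    simp only [LinearMap.sub_comp, LinearMap.comp_sub, LinearMap.comp_assoc]
    rw [t1, t2, t3, t4]
    have h0 := congrArg
      (fun F => F ∘ₗ (TensorProduct.map LinearMap.id (TensorProduct.map T T)
        ∘ₗ (TensorProduct.map α Δ ∘ₗ Δ)))
      (aux_P0 (K := K) (L := L))
    simp only [LinearMap.sub_comp, LinearMap.add_comp, LinearMap.id_comp, LinearMap.zero_comp,
      LinearMap.comp_sub, LinearMap.comp_add, LinearMap.comp_assoc] at h0 ⊢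
    abel_nf at h0 ⊢
    exact h0


  · -- coderivation
    show (A - B) ∘ₗ δL = _
    simp only [LinearMap.sub_comp, LinearMap.comp_sub, LinearMap.comp_add,
      LinearMap.add_comp, hA, hB, LinearMap.comp_assoc]
    rw [hcoder]
    simp only [hc, LinearMap.comp_add, aux_comm_map, aux_map_map_comp, hI,
      LinearMap.id_comp, LinearMap.comp_id]
    rw [hTα, hTδ]
    abel
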